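/- The set of ex-ante efficient lotteries coincides with the set of ex-post efficient lotteries if and only if there exists a utilitarian representation (u_i)_{i∈N} of the agents' preferences such that the welfare ∑_{i∈N} u_i(x) takes the same value for all Pareto optimal outcomes x ∈ X*. -/

import Mathlib

attribute [local instance] Classical.propDecidable

/-- The strict part of a preference relation. -/
def strictPref {X : Type*} (r : X → X → Prop) (x y : X) : Prop := r x y ∧ ¬ r y x

/-- A preference: a complete (total) and transitive binary relation. -/
def IsPrefOrder {X : Type*} (r : X → X → Prop) : Prop :=
  (∀ x y, r x y ∨ r y x) ∧ Transitive r

/-- A lottery over the finite set of outcomes `X`. -/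
def IsLottery {X : Type*} [Fintype X] (p : X → ℝ) : Prop :=
  (∀ x, 0 ≤ p x) ∧ ∑ x, p x = 1

/-- Total weight a lottery `p` places on outcomes strictly preferred to `x`. -/
noncomputable def upWeight {X : Type*} [Fintype X] (r : X → X → Prop) (p : X → ℝ) (x : X) : ℝ :=
  ∑ y ∈ Finset.univ.filter (fun y => strictPref r y x), p y

/-- First-order stochastic dominance (weak): `p ≿ q`. -/
def SDge {X : Type*} [Fintype X] (r : X → X → Prop) (p q : X → ℝ) : Prop :=
  ∀ x, upWeight r q x ≤ upWeight r p x

/-- First-order stochastic dominance (strict): `p ≻ q`. -/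
def SDgt {X : Type*} [Fintype X] (r : X → X → Prop) (p q : X → ℝ) : Prop :=
  SDge r p q ∧ ∃ x, upWeight r q x < upWeight r p x

/-- A lottery `p` is ex-ante efficient if no lottery weakly SD-dominates it for all agents
and strictly for some agent. -/
def ExAnteEff {X N : Type*} [Fintype X] (pref : N → X → X → Prop) (p : X → ℝ) : Prop :=
  ¬ ∃ q : X → ℝ, IsLottery q ∧ (∀ i, SDge (pref i) q p) ∧ ∃ j, SDgt (pref j) q p

/-- An outcome is Pareto optimal if no outcome is weakly better for all agents and
strictly better for some agent. -/
def ParetoOptimal {X N : Type*} (pref : N → X → X → Prop) (x : X) : Prop :=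
  ¬ ∃ y, (∀ i, pref i y x) ∧ ∃ j, strictPref (pref j) y x

/-- A lottery is ex-post efficient if it is supported on Pareto optimal outcomes. -/
def ExPostEff {X N : Type*} [Fintype X] (pref : N → X → X → Prop) (p : X → ℝ) : Prop :=
  ∀ x, 0 < p x → ParetoOptimal pref x

/-- `u` is a utility representation of the preference `r`. -/
def Represents {X : Type*} (u : X → ℝ) (r : X → X → Prop) : Prop :=
  ∀ x y, (u y ≤ u x ↔ r x y)

/-!
If every Pareto optimal outcome has welfare `c`, then `c` is the maximal welfare, because a welfare
maximiser is Pareto optimal. An ex-post efficient lottery therefore has expected welfare `c`, while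
a lottery dominating it for every agent, strictly for one, would have expected welfare above `c`:
first-order stochastic dominance raises expected utility under every representation (Abel
summation over the utility levels). Ex-ante efficiency always implies ex-post efficiency, since
shifting the mass of an outcome onto a Pareto improvement dominates.

Conversely, the uniform lottery on the Pareto optimal outcomes is ex-post, hence ex-ante,
efficient. Its feasible perturbations (zero-sum and supported on the Pareto optimal outcomes) have
dominance profiles meeting the nonnegative orthant only at zero, so Stiemke's lemma yields strictly
positive weights `w (i, x)` orthogonal to all of them. The utilities
`u i y = ∑_{y ≻ᵢ x} w (i, x)` represent the preferences and give equal welfare to all Pareto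
optimal outcomes.
-/

open Finset

noncomputable def nextGap (V : Finset ℝ) (v : ℝ) : ℝ :=
  if h : (V.filter (v < ·)).Nonempty then (V.filter (v < ·)).min' h - v else 0

lemma nextGap_nonneg (V : Finset ℝ) (v : ℝ) : 0 ≤ nextGap V v := by
  unfold nextGap
  split_ifs with h
  · exact sub_nonneg.2 (mem_filter.1 (min'_mem _ h)).2.le
  · rfl

lemma nextGap_pos {V : Finset ℝ} {v w : ℝ} (hw : w ∈ V) (hvw : v < w) : 0 < nextGap V v := by
  have h : (V.filter (v < ·)).Nonempty := ⟨w, mem_filter.2 ⟨hw, hvw⟩⟩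
  rw [nextGap, dif_pos h]
  exact sub_pos.2 (mem_filter.1 (min'_mem _ h)).2

lemma nextGap_insert_of_lt {V : Finset ℝ} {a v : ℝ} (hav : a < v) :
    nextGap (insert a V) v = nextGap V v := by
  have h : (insert a V).filter (v < ·) = V.filter (v < ·) := by
    rw [filter_insert, if_neg hav.not_gt]
  simp only [nextGap, h]

lemma nextGap_insert_self {V : Finset ℝ} {a : ℝ} (ha : ∀ x ∈ V, a < x) (hV : V.Nonempty) :
    nextGap (insert a V) a = V.min' hV - a := by
  have h : (insert a V).filter (a < ·) = V := by
    rw [filter_insert, if_neg (lt_irrefl a), filter_true_of_mem ha]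
  simp only [nextGap, h, dif_pos hV]

lemma sum_nextGap_filter_lt (V : Finset ℝ) :
    ∀ t ∈ V, ∀ s ∈ V, (∀ x ∈ V, s ≤ x) → ∑ v ∈ V.filter (· < t), nextGap V v = t - s := by
  induction V using Finset.induction_on_min with
  | empty => simp
  | insert a V ha ih =>
    intro t ht s hs hmin
    have hsa : s = a := by
      rcases mem_insert.1 hs with rfl | hsV
      · rfl
      · exact absurd (hmin a (mem_insert_self a V)) (ha s hsV).not_ge
    subst hsa
    rcases mem_insert.1 ht with rfl | htV
    · rw [filter_false_of_mem (fun x hx => not_lt.2 (hmin x hx)), sum_empty, sub_self]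
    have hVne : V.Nonempty := ⟨t, htV⟩
    have hfilter : (insert s V).filter (· < t) = insert s (V.filter (· < t)) := by
      rw [filter_insert, if_pos (ha t htV)]
    have haV : s ∉ V.filter (· < t) := fun h => lt_irrefl s (ha s (mem_filter.1 h).1)
    rw [hfilter, sum_insert haV, nextGap_insert_self ha hVne,
      sum_congr rfl (fun v hv => nextGap_insert_of_lt (ha v (mem_filter.1 hv).1)),
      ih t htV _ (min'_mem V hVne) (fun x hx => min'_le V x hx)]
    ring

lemma sum_mul_eq_sum_nextGap_mul {X : Type*} [Fintype X] (u d : X → ℝ) (hd : ∑ y, d y = 0) :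
    ∑ y, d y * u y = ∑ v ∈ univ.image u,
      nextGap (univ.image u) v * ∑ y ∈ univ.filter (fun y => v < u y), d y := by
  rcases isEmpty_or_nonempty X with hX | hX
  · simp
  obtain ⟨x₀, -, hx₀⟩ := exists_min_image univ u univ_nonempty
  have hu : ∀ y, u y = u x₀ + ∑ v ∈ (univ.image u).filter (· < u y), nextGap (univ.image u) v :=
    fun y => by
      rw [sum_nextGap_filter_lt _ (u y) (mem_image_of_mem u (mem_univ y)) (u x₀)
        (mem_image_of_mem u (mem_univ x₀)) (by simpa using fun z => hx₀ z (mem_univ z))]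
      ring
  calc ∑ y, d y * u y
      = ∑ y, d y * (u x₀ + ∑ v ∈ (univ.image u).filter (· < u y), nextGap (univ.image u) v) :=
        sum_congr rfl fun y _ => by rw [← hu y]
    _ = u x₀ * ∑ y, d y + ∑ y, ∑ v ∈ univ.image u,
          if v < u y then d y * nextGap (univ.image u) v else 0 := by
        simp only [mul_add, sum_add_distrib, mul_sum, sum_filter, mul_ite, mul_zero, mul_comm]
    _ = _ := by
        rw [hd, mul_zero, zero_add, sum_comm]
        simp only [sum_filter, mul_sum, mul_ite, mul_zero, mul_comm]

lemma sum_mul_sub_sum_mul_eq_sum_nextGap_mul {X : Type*} [Fintype X] (u : X → ℝ) {p q : X → ℝ}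
    (hpq : ∑ y, p y = ∑ y, q y) :
    ∑ y, q y * u y - ∑ y, p y * u y = ∑ v ∈ univ.image u, nextGap (univ.image u) v *
      (∑ y ∈ univ.filter (fun y => v < u y), q y - ∑ y ∈ univ.filter (fun y => v < u y), p y) := by
  simpa only [Pi.sub_apply, sub_mul, sum_sub_distrib] using
    sum_mul_eq_sum_nextGap_mul u (q - p) (by simp [sum_sub_distrib, hpq])

section UpWeight
variable {X : Type*} [Fintype X] {r : X → X → Prop}

lemma upWeight_add (p q : X → ℝ) (x : X) :
    upWeight r (p + q) x = upWeight r p x + upWeight r q x :=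
  sum_add_distrib

lemma upWeight_sub (p q : X → ℝ) (x : X) :
    upWeight r (p - q) x = upWeight r p x - upWeight r q x :=
  sum_sub_distrib ..

lemma upWeight_smul (c : ℝ) (p : X → ℝ) (x : X) : upWeight r (c • p) x = c * upWeight r p x :=
  (mul_sum _ _ _).symm

lemma upWeight_single (y x : X) :
    upWeight r (Pi.single y 1) x = if strictPref r y x then 1 else 0 := by
  simp [upWeight, sum_pi_single']

end UpWeight

namespace Represents
variable {X : Type*} {r : X → X → Prop} {u : X → ℝ}

lemma strictPref_iff (hu : Represents u r) {x y : X} : strictPref r y x ↔ u x < u y := by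
  rw [strictPref, ← hu, ← hu, not_le]
  exact ⟨And.right, fun h => ⟨h.le, h⟩⟩

lemma upWeight_eq [Fintype X] (hu : Represents u r) (p : X → ℝ) (x : X) :
    upWeight r p x = ∑ y ∈ univ.filter (fun y => u x < u y), p y := by
  simp only [upWeight, hu.strictPref_iff]

variable [Fintype X] {p q : X → ℝ}

lemma sum_mul_le_of_sdge (hu : Represents u r) (hpq : ∑ y, p y = ∑ y, q y) (h : SDge r q p) :
    ∑ y, p y * u y ≤ ∑ y, q y * u y := by
  rw [← sub_nonneg, sum_mul_sub_sum_mul_eq_sum_nextGap_mul u hpq]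
  refine sum_nonneg fun v hv => ?_
  obtain ⟨x, -, rfl⟩ := mem_image.1 hv
  rw [← hu.upWeight_eq, ← hu.upWeight_eq]
  exact mul_nonneg (nextGap_nonneg _ _) (sub_nonneg.2 (h x))

lemma sum_mul_lt_of_sdgt (hu : Represents u r) (hpq : ∑ y, p y = ∑ y, q y) (h : SDgt r q p) :
    ∑ y, p y * u y < ∑ y, q y * u y := by
  obtain ⟨hge, x, hx⟩ := h
  obtain ⟨y, hy⟩ : (univ.filter (fun y => u x < u y)).Nonempty := by
    by_contra hempty
    simp only [hu.upWeight_eq, not_nonempty_iff_eq_empty.1 hempty, sum_empty] at hx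
    exact lt_irrefl 0 hx
  rw [← sub_pos, sum_mul_sub_sum_mul_eq_sum_nextGap_mul u hpq]
  refine sum_pos' (fun v hv => ?_) ⟨u x, mem_image_of_mem u (mem_univ x), ?_⟩
  · obtain ⟨x', -, rfl⟩ := mem_image.1 hv
    rw [← hu.upWeight_eq, ← hu.upWeight_eq]
    exact mul_nonneg (nextGap_nonneg _ _) (sub_nonneg.2 (hge x'))
  · rw [← hu.upWeight_eq, ← hu.upWeight_eq]
    exact mul_pos (nextGap_pos (mem_image_of_mem u (mem_univ y)) (mem_filter.1 hy).2) (sub_pos.2 hx)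

end Represents

lemma strictPref_of_pref_of_strictPref {X : Type*} {r : X → X → Prop} (hr : IsPrefOrder r)
    {x y z : X} (hyx : r y x) (hxz : strictPref r x z) : strictPref r y z :=
  ⟨hr.2 hyx hxz.1, fun hzy => hxz.2 (hr.2 hzy hyx)⟩

section Efficiency
variable {X N : Type*} [Fintype X] {pref : N → X → X → Prop} {p d : X → ℝ}

lemma ExAnteEff.upWeight_eq_zero (h : ExAnteEff pref p) (hp : ∑ y, p y = 1)
    (hpd : ∀ y, 0 ≤ p y + d y) (hd : ∑ y, d y = 0) (hge : ∀ i x, 0 ≤ upWeight (pref i) d x)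
    (i : N) (x : X) : upWeight (pref i) d x = 0 := by
  by_contra hne
  have hsd : ∀ j, SDge (pref j) (p + d) p := fun j z => by
    rw [upWeight_add]
    linarith [hge j z]
  refine h ⟨p + d, ⟨hpd, by simp [sum_add_distrib, hp, hd]⟩, hsd, i, hsd i, x, ?_⟩
  rw [upWeight_add]
  linarith [lt_of_le_of_ne (hge i x) (Ne.symm hne)]

lemma ExAnteEff.exPostEff (hpref : ∀ i, IsPrefOrder (pref i)) (hp : IsLottery p)
    (h : ExAnteEff pref p) : ExPostEff pref p := by
  rintro x hx ⟨y, hyx, j, hj⟩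
  have hne : y ≠ x := by
    rintro rfl
    exact hj.2 hj.1
  -- move the mass of `x` onto the Pareto improvement `y`
  set d : X → ℝ := p x • (Pi.single y 1 - Pi.single x 1) with hd
  have hupd : ∀ i z, upWeight (pref i) d z = p x * ((if strictPref (pref i) y z then 1 else 0) -
      (if strictPref (pref i) x z then 1 else 0)) := fun i z => by
    rw [hd, upWeight_smul, upWeight_sub, upWeight_single, upWeight_single]
  have hpd : ∀ z, 0 ≤ p z + d z := fun z => by
    rcases eq_or_ne z x with rfl | hzx
    · simp [hd, hne]
    · have : 0 ≤ (Pi.single y 1 : X → ℝ) z := by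
        rw [Pi.single_apply]
        split_ifs <;> norm_num
      simpa [hd, hzx] using add_nonneg (hp.1 z) (mul_nonneg (hp.1 x) this)
  have hge : ∀ i z, 0 ≤ upWeight (pref i) d z := fun i z => by
    rw [hupd]
    refine mul_nonneg (hp.1 x) ?_
    split_ifs with hy hxz hxz
    · norm_num
    · norm_num
    · exact absurd (strictPref_of_pref_of_strictPref (hpref i) (hyx i) hxz) hy
    · norm_num
  have hzero := h.upWeight_eq_zero hp.2 hpd (by simp [hd, ← mul_sum, sum_sub_distrib]) hge j x
  rw [hupd, if_pos hj, if_neg fun h => h.2 h.1] at hzero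
  linarith

end Efficiency

open Filter Topology in
lemma exists_pos_forall_add_mul_nonneg {X : Type*} [Finite X] {p d : X → ℝ} (hp : ∀ y, 0 ≤ p y)
    (hd : ∀ y, p y = 0 → d y = 0) : ∃ t : ℝ, 0 < t ∧ ∀ y, 0 ≤ p y + t * d y := by
  have hev : ∀ y, ∀ᶠ t in 𝓝[>] (0 : ℝ), 0 ≤ p y + t * d y := fun y => by
    rcases (hp y).eq_or_lt with h | h
    · exact Eventually.of_forall fun t => by simp [hd y h.symm, ← h]
    · have hlim : Tendsto (fun t => p y + t * d y) (𝓝[>] 0) (𝓝 (p y)) :=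
        ((continuous_const.add (continuous_id.mul continuous_const)).tendsto' 0 (p y)
          (by simp)).mono_left nhdsWithin_le_nhds
      exact hlim.eventually (le_mem_nhds h)
  obtain ⟨t, ht, ht0⟩ := ((eventually_all.2 hev).and self_mem_nhdsWithin).exists
  exact ⟨t, ht0, ht⟩

/-- Stiemke's lemma. -/
theorem Submodule.exists_forall_pos_sum_mul_eq_zero {ι : Type*} [Fintype ι]
    (L : Submodule ℝ (ι → ℝ)) (hL : ∀ v ∈ L, 0 ≤ v → v = 0) :
    ∃ w : ι → ℝ, (∀ i, 0 < w i) ∧ ∀ v ∈ L, ∑ i, w i * v i = 0 := by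
  have hdisj : Disjoint (L : Set (ι → ℝ)) (stdSimplex ℝ ι) :=
    Set.disjoint_left.2 fun v hvL hvΔ => by
      simpa [hL v hvL hvΔ.1] using hvΔ.2
  obtain ⟨f, a, b, hfL, hab, hfΔ⟩ := geometric_hahn_banach_closed_compact (L.convex)
    L.closed_of_finiteDimensional (convex_stdSimplex ℝ ι) (isCompact_stdSimplex ℝ ι) hdisj
  have hf0 : ∀ v ∈ L, f v = 0 := fun v hv => by
    by_contra hne
    have := hfL ((a / f v) • v) (L.smul_mem _ hv)
    rw [map_smul, smul_eq_mul, div_mul_cancel₀ _ hne] at this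
    exact lt_irrefl a this
  have ha : 0 < a := by simpa using hfL 0 L.zero_mem
  refine ⟨fun i => f (Pi.single i 1), fun i => ?_, fun v hv => ?_⟩
  · linarith [hfΔ _ (single_mem_stdSimplex ℝ i)]
  · rw [← hf0 v hv]
    conv_rhs => rw [← univ_sum_single v]
    rw [map_sum]
    refine sum_congr rfl fun i _ => ?_
    rw [show Pi.single i (v i) = v i • Pi.single i (1 : ℝ) by
      rw [← Pi.single_smul', smul_eq_mul, mul_one], map_smul, smul_eq_mul, mul_comm]

section RankUtility
variable {X : Type*} [Fintype X] {r : X → X → Prop} {w : X → ℝ}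

noncomputable def rankUtility (r : X → X → Prop) (w : X → ℝ) (y : X) : ℝ :=
  ∑ x ∈ univ.filter (fun x => strictPref r y x), w x

lemma rankUtility_eq_sum_mul_upWeight_single (r : X → X → Prop) (w : X → ℝ) (y : X) :
    rankUtility r w y = ∑ x, w x * upWeight r (Pi.single y 1) x := by
  simp [rankUtility, upWeight_single, sum_filter]

lemma represents_rankUtility (hr : IsPrefOrder r) (hw : ∀ x, 0 < w x) :
    Represents (rankUtility r w) r := by
  have hmono : ∀ {x y}, r x y → univ.filter (fun z => strictPref r y z) ⊆
      univ.filter (fun z => strictPref r x z) := fun hxy z hz => by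
    simp only [mem_filter, mem_univ, true_and] at hz ⊢
    exact strictPref_of_pref_of_strictPref hr hxy hz
  intro x y
  refine ⟨fun hle => ?_, fun hxy => sum_le_sum_of_subset_of_nonneg (hmono hxy)
    fun z _ _ => (hw z).le⟩
  by_contra hxy
  have hyx : strictPref r y x := ⟨(hr.1 x y).resolve_left hxy, hxy⟩
  refine hle.not_gt (sum_lt_sum_of_subset (hmono hyx.1) (i := x) ?_ ?_ (hw x)
    fun z _ _ => (hw z).le)
  · simpa using hyx
  · simpa using fun h : strictPref r x x => h.2 h.1

end RankUtility

section Welfare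
variable {X N : Type*} [Fintype X] [Fintype N] {pref : N → X → X → Prop} {p : X → ℝ}

theorem ExAnteEff.exists_pos_weights_welfare_eq (h : ExAnteEff pref p) (hp : IsLottery p) :
    ∃ w : N × X → ℝ, (∀ k, 0 < w k) ∧ ∀ y z, 0 < p y → 0 < p z →
      ∑ i, rankUtility (pref i) (fun x => w (i, x)) y =
        ∑ i, rankUtility (pref i) (fun x => w (i, x)) z := by
  let S : Submodule ℝ (X → ℝ) :=
    { carrier := {d | ∑ y, d y = 0 ∧ ∀ y, p y = 0 → d y = 0}
      add_mem' := fun {d e} hd he => ⟨by simp [sum_add_distrib, hd.1, he.1],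
        fun y hy => by simp [hd.2 y hy, he.2 y hy]⟩
      zero_mem' := ⟨by simp, fun _ _ => rfl⟩
      smul_mem' := fun c d hd => ⟨by simp [← mul_sum, hd.1], fun y hy => by simp [hd.2 y hy]⟩ }
  let A : (X → ℝ) →ₗ[ℝ] (N × X → ℝ) :=
    { toFun := fun d k => upWeight (pref k.1) d k.2
      map_add' := fun d e => funext fun k => upWeight_add d e k.2
      map_smul' := fun c d => funext fun k => upWeight_smul c d k.2 }
  -- a nonzero nonnegative vector in `A '' S` would give an ex-ante improvement of `p`
  obtain ⟨w, hw, hwS⟩ := (S.map A).exists_forall_pos_sum_mul_eq_zero <| by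
    rintro _ ⟨d, ⟨hd, hsupp⟩, rfl⟩ hnonneg
    obtain ⟨t, ht, htd⟩ := exists_pos_forall_add_mul_nonneg hp.1 hsupp
    funext k
    have hzero := h.upWeight_eq_zero hp.2 (d := t • d) htd (by simp [← mul_sum, hd])
      (fun i x => by rw [upWeight_smul]; exact mul_nonneg ht.le (hnonneg (i, x))) k.1 k.2
    rw [upWeight_smul] at hzero
    exact (mul_eq_zero.1 hzero).resolve_left ht.ne'
  refine ⟨w, hw, fun y z hy hz => sub_eq_zero.1 ?_⟩
  have hdS : (Pi.single y 1 - Pi.single z 1 : X → ℝ) ∈ S := by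
    refine ⟨by simp [sum_sub_distrib], fun x hx => ?_⟩
    have hxy : x ≠ y := by rintro rfl; linarith
    have hxz : x ≠ z := by rintro rfl; linarith
    simp [hxy, hxz]
  rw [← hwS _ (Submodule.mem_map_of_mem hdS)]
  simp [A, rankUtility_eq_sum_mul_upWeight_single, Fintype.sum_prod_type, upWeight_sub, mul_sub,
    sum_sub_distrib]

end Welfare

noncomputable def uniformLottery {X : Type*} (s : Finset X) (x : X) : ℝ :=
  if x ∈ s then (#s : ℝ)⁻¹ else 0

lemma uniformLottery_pos_iff {X : Type*} {s : Finset X} {x : X} :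
    0 < uniformLottery s x ↔ x ∈ s := by
  unfold uniformLottery
  split_ifs with hx
  · exact ⟨fun _ => hx, fun _ => inv_pos.2 (Nat.cast_pos.2 (card_pos.2 ⟨x, hx⟩))⟩
  · simpa using hx

lemma isLottery_uniformLottery {X : Type*} [Fintype X] {s : Finset X} (hs : s.Nonempty) :
    IsLottery (uniformLottery s) := by
  refine ⟨fun x => by unfold uniformLottery; split_ifs <;> positivity, ?_⟩
  simp [uniformLottery, hs.card_ne_zero]

section Pareto
variable {X N : Type*} [Fintype N] {pref : N → X → X → Prop} {u : N → X → ℝ}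

lemma paretoOptimal_of_forall_welfare_le (hu : ∀ i, Represents (u i) (pref i)) {x : X}
    (hx : ∀ y, ∑ i, u i y ≤ ∑ i, u i x) : ParetoOptimal pref x := by
  rintro ⟨y, hyx, j, hj⟩
  exact (hx y).not_gt
    (sum_lt_sum (fun i _ => (hu i y x).2 (hyx i)) ⟨j, mem_univ j, (hu j).strictPref_iff.1 hj⟩)

variable [Fintype X]

theorem exists_pos_weights_welfare_const
    (h : ∀ p, IsLottery p → ExPostEff pref p → ExAnteEff pref p) :
    ∃ w : N × X → ℝ, (∀ k, 0 < w k) ∧ ∃ c : ℝ, ∀ x, ParetoOptimal pref x →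
      ∑ i, rankUtility (pref i) (fun z => w (i, z)) x = c := by
  set P := univ.filter (ParetoOptimal pref)
  rcases P.eq_empty_or_nonempty with hP | ⟨y₀, hy₀⟩
  · refine ⟨1, fun _ => one_pos, 0, fun x hx => ?_⟩
    simpa [P, hx] using hP.le (mem_filter.2 ⟨mem_univ x, hx⟩)
  have hlot := isLottery_uniformLottery ⟨y₀, hy₀⟩
  have hpost : ExPostEff pref (uniformLottery P) :=
    fun x hx => (mem_filter.1 (uniformLottery_pos_iff.1 hx)).2
  obtain ⟨w, hw, hW⟩ := (h _ hlot hpost).exists_pos_weights_welfare_eq hlot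
  exact ⟨w, hw, _, fun x hx => hW x y₀ (uniformLottery_pos_iff.2 (mem_filter.2 ⟨mem_univ x, hx⟩))
    (uniformLottery_pos_iff.2 hy₀)⟩

lemma sum_sum_mul_eq_sum_mul_sum (p : X → ℝ) :
    ∑ i, ∑ y, p y * u i y = ∑ y, p y * ∑ i, u i y := by
  rw [sum_comm]
  simp only [mul_sum]

theorem exAnteEff_of_welfare_const (hu : ∀ i, Represents (u i) (pref i)) {c : ℝ}
    (hc : ∀ x, ParetoOptimal pref x → ∑ i, u i x = c) {p : X → ℝ} (hp : IsLottery p)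
    (h : ExPostEff pref p) : ExAnteEff pref p := by
  rintro ⟨q, hq, hge, j, hgt⟩
  have hle : ∀ x, ∑ i, u i x ≤ c := fun x => by
    obtain ⟨m, -, hm⟩ := exists_max_image univ (fun y => ∑ i, u i y) ⟨x, mem_univ x⟩
    rw [← hc m (paretoOptimal_of_forall_welfare_le hu fun y => hm y (mem_univ y))]
    exact hm x (mem_univ x)
  have hpq : ∑ y, p y = ∑ y, q y := hp.2.trans hq.2.symm
  have hlt : ∑ i, ∑ y, p y * u i y < ∑ i, ∑ y, q y * u i y :=
    sum_lt_sum (fun i _ => (hu i).sum_mul_le_of_sdge hpq (hge i))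
      ⟨j, mem_univ j, (hu j).sum_mul_lt_of_sdgt hpq hgt⟩
  have key : c < c := calc
    c = ∑ y, p y * c := by rw [← sum_mul, hp.2, one_mul]
    _ = ∑ y, p y * ∑ i, u i y := sum_congr rfl fun y _ => by
      rcases (hp.1 y).eq_or_lt with h0 | hpos
      · rw [← h0, zero_mul, zero_mul]
      · rw [hc y (h y hpos)]
    _ < ∑ y, q y * ∑ i, u i y := by simpa only [sum_sum_mul_eq_sum_mul_sum] using hlt
    _ ≤ ∑ y, q y * c := sum_le_sum fun y _ => mul_le_mul_of_nonneg_left (hle y) (hq.1 y)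
    _ = c := by rw [← sum_mul, hq.2, one_mul]
  exact lt_irrefl c key

end Pareto

theorem stmt_6_general {X N : Type*} [Fintype X] [Fintype N]
    (pref : N → X → X → Prop) (hpref : ∀ i, IsPrefOrder (pref i)) :
    ({p : X → ℝ | IsLottery p ∧ ExAnteEff pref p} =
        {p : X → ℝ | IsLottery p ∧ ExPostEff pref p}) ↔
      ∃ u : N → X → ℝ, (∀ i, Represents (u i) (pref i)) ∧
        ∃ c : ℝ, ∀ x, ParetoOptimal pref x → ∑ i, u i x = c := by
  constructor
  · intro hset
    obtain ⟨w, hw, hc⟩ := exists_pos_weights_welfare_const fun p hp hpost =>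
      ((Set.ext_iff.1 hset p).2 ⟨hp, hpost⟩).2
    exact ⟨fun i => rankUtility (pref i) (fun z => w (i, z)),
      fun i => represents_rankUtility (hpref i) fun z => hw (i, z), hc⟩
  · rintro ⟨u, hu, c, hc⟩
    ext p
    exact ⟨fun ⟨hp, h⟩ => ⟨hp, h.exPostEff hpref hp⟩,
      fun ⟨hp, h⟩ => ⟨hp, exAnteEff_of_welfare_const hu hc hp h⟩⟩

/-- Ex-ante efficiency coincides with ex-post efficiency iff there is a
utilitarian representation under which all Pareto optimal outcomes have the same welfare. -/
theorem stmt_6 {X N : Type*} [Fintype X] [Nonempty X] [Fintype N] [Nonempty N]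
    (pref : N → X → X → Prop) (hpref : ∀ i, IsPrefOrder (pref i)) :
    ({p : X → ℝ | IsLottery p ∧ ExAnteEff pref p} =
        {p : X → ℝ | IsLottery p ∧ ExPostEff pref p}) ↔
      ∃ u : N → X → ℝ, (∀ i, Represents (u i) (pref i)) ∧
        ∃ c : ℝ, ∀ x, ParetoOptimal pref x → ∑ i, u i x = c :=
  stmt_6_general pref hpref
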